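/- arXiv:2310.09104 — 4 statements merged into one kernel-verified Lean document; each statement's English description precedes it below -/
import Mathlib

section
/- Let ψ ∈ 𝒪_M(ℝ) be such that the composition operator C_ψ : 𝒪_M(ℝ) → 𝒪_M(ℝ) is topologically transitive. Then ψ has no fixed points and ψ'(x) > 0 for every x ∈ ℝ. -/
open Filter Topology Set

noncomputable section

/-- A smooth real function is *slowly increasing* if each of its derivatives
grows at most polynomially. -/
def SlowlyIncreasing (f : ℝ → ℝ) : Prop :=
  ContDiff ℝ (⊤ : ℕ∞) f ∧
    ∀ j : ℕ, ∃ C : ℝ, 0 < C ∧ ∃ n : ℕ, ∀ x : ℝ,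
      |iteratedDeriv j f x| ≤ C * (1 + x ^ 2) ^ n

/-- The space `𝒪_M(ℝ)` of slowly increasing smooth functions. -/
structure OM : Type where
  toFun : ℝ → ℝ
  slowly : SlowlyIncreasing toFun

/-- The seminorm `p_{m,v}`, evaluated on a plain function. -/
def pOM (m : ℕ) (v : SchwartzMap ℝ ℝ) (f : ℝ → ℝ) : ℝ :=
  ⨆ (x : ℝ) (j : Fin (m + 1)), |v x * iteratedDeriv j.1 f x|

/-- The natural locally convex topology of `𝒪_M(ℝ)`, generated by the balls of the
seminorms `p_{m,v}`. -/
instance : TopologicalSpace OM :=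
  TopologicalSpace.generateFrom
    { U : Set OM | ∃ (g : OM) (m : ℕ) (v : SchwartzMap ℝ ℝ) (ε : ℝ), 0 < ε ∧
        U = { f : OM | pOM m v (fun x => f.toFun x - g.toFun x) < ε } }

/-- Topological transitivity. -/
def TopologicallyTransitive {X : Type*} [TopologicalSpace X] (T : X → X) : Prop :=
  ∀ U V : Set X, IsOpen U → IsOpen V → U.Nonempty → V.Nonempty →
    ∃ n : ℕ, 0 < n ∧ (T^[n] '' U ∩ V).Nonempty

/-- Topological mixing. -/
def TopologicallyMixing {X : Type*} [TopologicalSpace X] (T : X → X) : Prop :=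
  ∀ U V : Set X, IsOpen U → IsOpen V → U.Nonempty → V.Nonempty →
    ∃ N : ℕ, ∀ n : ℕ, N ≤ n → (T^[n] '' U ∩ V).Nonempty

/-- Sequential hypercyclicity: some orbit is sequentially dense. -/
def SequentiallyHypercyclic {X : Type*} [TopologicalSpace X] (T : X → X) : Prop :=
  ∃ g : X, ∀ f : X, ∃ u : ℕ → X,
    (∀ i : ℕ, ∃ n : ℕ, 0 < n ∧ u i = T^[n] g) ∧ Tendsto u atTop (𝓝 f)

/-- Hypercyclicity: some orbit is dense. -/
def Hypercyclic {X : Type*} [TopologicalSpace X] (T : X → X) : Prop :=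
  ∃ g : X, Dense { x : X | ∃ n : ℕ, 0 < n ∧ x = T^[n] g }

/-- Chaos: topological transitivity together with a dense set of periodic points. -/
def Chaotic {X : Type*} [TopologicalSpace X] (T : X → X) : Prop :=
  TopologicallyTransitive T ∧ Dense { x : X | ∃ n : ℕ, 0 < n ∧ T^[n] x = x }

/-! ### Auxiliary lemmas -/

lemma iteratedDeriv_const'' : ∀ (j : ℕ) (c : ℝ),
    iteratedDeriv j (fun _ : ℝ => c) = fun _ => if j = 0 then c else 0 := by
  intro j
  induction j with
  | zero => intro c; simp [iteratedDeriv_zero]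
  | succ k ih =>
    intro c
    rw [iteratedDeriv_succ']
    simp only [deriv_const']
    rw [ih 0]
    simp

lemma iteratedDeriv_sub'' {f g : ℝ → ℝ} (hf : ContDiff ℝ (⊤ : ℕ∞) f) (hg : ContDiff ℝ (⊤ : ℕ∞) g)
    (j : ℕ) (x : ℝ) :
    iteratedDeriv j (fun y => f y - g y) x = iteratedDeriv j f x - iteratedDeriv j g x := by
  have h := iteratedDerivWithin_sub (Set.mem_univ x) uniqueDiffOn_univ
    (hf.contDiffWithinAt.of_le (m := (j:ℕ)) (by exact_mod_cast le_top)) (hg.contDiffWithinAt.of_le (m := (j:ℕ)) (by exact_mod_cast le_top))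
  simpa [iteratedDerivWithin_univ, Pi.sub_def] using h

lemma slowly_sub {f g : ℝ → ℝ} (hf : SlowlyIncreasing f) (hg : SlowlyIncreasing g) :
    SlowlyIncreasing (fun x => f x - g x) := by
  refine ⟨hf.1.sub hg.1, fun j => ?_⟩
  obtain ⟨Cf, hCf, nf, hf'⟩ := hf.2 j
  obtain ⟨Cg, hCg, ng, hg'⟩ := hg.2 j
  refine ⟨Cf + Cg, by positivity, max nf ng, fun x => ?_⟩
  rw [iteratedDeriv_sub'' hf.1 hg.1]
  have h1 : (1:ℝ) ≤ 1 + x ^ 2 := by nlinarith [sq_nonneg x]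
  have h2 : (1 + x ^ 2) ^ nf ≤ (1 + x ^ 2) ^ (max nf ng) :=
    pow_le_pow_right₀ h1 (le_max_left _ _)
  have h3 : (1 + x ^ 2) ^ ng ≤ (1 + x ^ 2) ^ (max nf ng) :=
    pow_le_pow_right₀ h1 (le_max_right _ _)
  have h4 := hf' x
  have h5 := hg' x
  have h6 : |iteratedDeriv j f x - iteratedDeriv j g x| ≤
      |iteratedDeriv j f x| + |iteratedDeriv j g x| := abs_sub _ _
  nlinarith [abs_nonneg (iteratedDeriv j f x), abs_nonneg (iteratedDeriv j g x)]

lemma pOM_bound {f : ℝ → ℝ} (hf : SlowlyIncreasing f) (m : ℕ) (v : SchwartzMap ℝ ℝ) :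
    ∃ B : ℝ, 0 ≤ B ∧ ∀ (x : ℝ) (j : Fin (m + 1)), |v x * iteratedDeriv j.1 f x| ≤ B := by
  have key : ∀ j : Fin (m + 1), ∃ Bj : ℝ, 0 ≤ Bj ∧
      ∀ x, |v x * iteratedDeriv j.1 f x| ≤ Bj := by
    intro j
    obtain ⟨C, hC, n, hb⟩ := hf.2 j.1
    obtain ⟨C0, hC0pos, hC0⟩ := v.decay 0 0
    obtain ⟨C1, hC1pos, hC1⟩ := v.decay (2 * n) 0
    have hv0 : ∀ x : ℝ, |v x| ≤ C0 := by
      intro x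
      have := hC0 x
      simpa [norm_iteratedFDeriv_zero, Real.norm_eq_abs] using this
    have hv1 : ∀ x : ℝ, |x| ^ (2 * n) * |v x| ≤ C1 := by
      intro x
      have := hC1 x
      simpa [norm_iteratedFDeriv_zero, Real.norm_eq_abs] using this
    have hC0' : 0 ≤ C0 := le_trans (abs_nonneg _) (hv0 0)
    have hC1' : 0 ≤ C1 := le_trans (by positivity) (hv1 0)
    refine ⟨C * 2 ^ n * (C0 + C1), by positivity, fun x => ?_⟩
    have hpow : (1 + x ^ 2) ^ n ≤ 2 ^ n * (1 + |x| ^ (2 * n)) := by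
      rcases le_total (x ^ 2) 1 with h | h
      · calc (1 + x ^ 2) ^ n ≤ 2 ^ n :=
              pow_le_pow_left₀ (by positivity) (by linarith) n
          _ ≤ 2 ^ n * (1 + |x| ^ (2 * n)) :=
              le_mul_of_one_le_right (by positivity)
                (le_add_of_nonneg_right (by positivity))
      · have hx : |x| ^ (2 * n) = (x ^ 2) ^ n := by
          rw [pow_mul, sq_abs]
        calc (1 + x ^ 2) ^ n ≤ (2 * x ^ 2) ^ n :=
              pow_le_pow_left₀ (by positivity) (by linarith) n
          _ = 2 ^ n * (x ^ 2) ^ n := mul_pow _ _ _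
          _ ≤ 2 ^ n * (1 + |x| ^ (2 * n)) := by
              rw [hx]; nlinarith [pow_pos (show (0:ℝ) < 2 by norm_num) n,
                pow_nonneg (sq_nonneg x) n]
    have hvx : (0:ℝ) ≤ |v x| := abs_nonneg _
    have hb' := hb x
    rw [abs_mul]
    calc |v x| * |iteratedDeriv j.1 f x| ≤ |v x| * (C * (1 + x ^ 2) ^ n) :=
          mul_le_mul_of_nonneg_left hb' hvx
      _ ≤ |v x| * (C * (2 ^ n * (1 + |x| ^ (2 * n)))) := by
          have := mul_le_mul_of_nonneg_left hpow hC.le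
          exact mul_le_mul_of_nonneg_left this hvx
      _ = C * 2 ^ n * (|v x| + |x| ^ (2 * n) * |v x|) := by ring
      _ ≤ C * 2 ^ n * (C0 + C1) := by
          have := add_le_add (hv0 x) (hv1 x)
          exact mul_le_mul_of_nonneg_left this (by positivity)
  choose Bj hBj0 hBj using key
  refine ⟨∑ j, Bj j, Finset.sum_nonneg fun j _ => hBj0 j, fun x j => (hBj j x).trans ?_⟩
  exact Finset.single_le_sum (fun i _ => hBj0 i) (Finset.mem_univ j)

lemma le_pOM {f : ℝ → ℝ} (hf : SlowlyIncreasing f) (m : ℕ) (v : SchwartzMap ℝ ℝ)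
    (x : ℝ) (j : Fin (m + 1)) : |v x * iteratedDeriv j.1 f x| ≤ pOM m v f := by
  obtain ⟨B, hB0, hB⟩ := pOM_bound hf m v
  have hbdd : BddAbove (Set.range fun y : ℝ =>
      ⨆ i : Fin (m + 1), |v y * iteratedDeriv i.1 f y|) := by
    refine ⟨B, ?_⟩
    rintro z ⟨y, rfl⟩
    exact ciSup_le fun i => hB y i
  calc |v x * iteratedDeriv j.1 f x|
      ≤ ⨆ i : Fin (m + 1), |v x * iteratedDeriv i.1 f x| :=
        le_ciSup (f := fun i : Fin (m + 1) => |v x * iteratedDeriv i.1 f x|)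
          (Set.Finite.bddAbove (Set.finite_range _)) j
    _ ≤ pOM m v f := le_ciSup hbdd x

lemma pOM_zero (m : ℕ) (v : SchwartzMap ℝ ℝ) : pOM m v (fun _ => (0:ℝ)) = 0 := by
  unfold pOM
  have hz : ∀ (j : ℕ) (x : ℝ), iteratedDeriv j (fun _ : ℝ => (0:ℝ)) x = 0 := by
    intro j x
    rw [iteratedDeriv_const'']
    simp
  have key : ∀ x : ℝ,
      (⨆ j : Fin (m+1), |v x * iteratedDeriv j.1 (fun _ : ℝ => (0:ℝ)) x|) = 0 := by
    intro x
    have : ∀ j : Fin (m+1), |v x * iteratedDeriv j.1 (fun _ : ℝ => (0:ℝ)) x| = 0 := by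
      intro j; rw [hz j.1 x]; simp
    simp only [this]
    exact ciSup_const
  simp only [key]
  exact ciSup_const

lemma deriv_linear (a b : ℝ) : deriv (fun x : ℝ => a * x + b) = fun _ => a := by
  funext x
  simpa using (((hasDerivAt_id x).const_mul a).add_const b).deriv

lemma slowly_linear (a b : ℝ) : SlowlyIncreasing (fun x => a * x + b) := by
  constructor
  · exact (contDiff_const.mul contDiff_id).add contDiff_const
  · intro j
    refine ⟨|a| + |b| + 1, by positivity, 1, fun x => ?_⟩
    have h1 : (1:ℝ) ≤ 1 + x ^ 2 := by nlinarith [sq_nonneg x]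
    have ha : (0:ℝ) ≤ |a| := abs_nonneg a
    have hb : (0:ℝ) ≤ |b| := abs_nonneg b
    match j with
    | 0 =>
      rw [iteratedDeriv_zero]
      have habs : |a * x + b| ≤ |a| * |x| + |b| := by
        calc |a * x + b| ≤ |a * x| + |b| := abs_add_le _ _
          _ = |a| * |x| + |b| := by rw [abs_mul]
      have hx : |x| ≤ 1 + x ^ 2 := by nlinarith [abs_nonneg x, sq_abs x, sq_nonneg (|x| - 1)]
      calc |a * x + b| ≤ |a| * |x| + |b| := habs
        _ ≤ (|a| + |b| + 1) * (1 + x ^ 2) ^ 1 := by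
            rw [pow_one]; nlinarith
    | (k+1) =>
      rw [iteratedDeriv_succ', deriv_linear, iteratedDeriv_const'']
      rcases eq_or_ne k 0 with hk | hk
      · subst hk
        rw [if_pos rfl, pow_one]
        nlinarith [mul_nonneg ha (sq_nonneg x), mul_nonneg hb (sq_nonneg x), sq_nonneg x]
      · simp only [if_neg hk, abs_zero]
        positivity

/-- A linear function as an element of `OM`. -/
def OM.lin (a b : ℝ) : OM := ⟨fun x => a * x + b, slowly_linear a b⟩

lemma hasCompactSupport_iteratedDeriv {f : ℝ → ℝ} (hf : HasCompactSupport f) (n : ℕ) :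
    HasCompactSupport (iteratedDeriv n f) := by
  have h := hf.iteratedFDeriv (𝕜 := ℝ) n
  have heq : iteratedDeriv n f = (fun B : ContinuousMultilinearMap ℝ (fun _ : Fin n => ℝ) ℝ =>
      B fun _ => 1) ∘ iteratedFDeriv ℝ n f := by
    funext x
    exact iteratedDeriv_eq_iteratedFDeriv
  rw [heq]
  exact h.comp_left (by simp)

/-- A smooth bump function as a Schwartz function. -/
def schwartzOfBump (c : ℝ) (f : ContDiffBump c) : SchwartzMap ℝ ℝ where
  toFun := f
  smooth' := f.contDiff
  decay' := by
    intro k n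
    have hc : Continuous (fun x : ℝ => ‖x‖ ^ k * iteratedDeriv n (⇑f) x) :=
      (continuous_norm.pow k).mul
        ((f.contDiff (n := (⊤ : ℕ∞))).continuous_iteratedDeriv n (by exact_mod_cast le_top))
    have hsupp : HasCompactSupport (fun x : ℝ => ‖x‖ ^ k * iteratedDeriv n (⇑f) x) :=
      (hasCompactSupport_iteratedDeriv f.hasCompactSupport n).mul_left
        (f := fun x : ℝ => ‖x‖ ^ k)
    obtain ⟨C, hC⟩ := hc.bounded_above_of_compact_support hsupp
    refine ⟨C, fun x => ?_⟩
    have h2 := hC x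
    rw [Real.norm_eq_abs, abs_mul, abs_of_nonneg (by positivity : (0:ℝ) ≤ ‖x‖ ^ k)] at h2
    rwa [norm_iteratedFDeriv_eq_norm_iteratedDeriv, Real.norm_eq_abs]

@[simp] lemma schwartzOfBump_apply (c : ℝ) (f : ContDiffBump c) (x : ℝ) :
    schwartzOfBump c f x = f x := rfl

lemma monotone_deriv_nonneg {f : ℝ → ℝ} (hf : Monotone f) (x : ℝ)
    (hd : DifferentiableAt ℝ f x) : 0 ≤ deriv f x := by
  have h := hd.hasDerivAt
  rw [hasDerivAt_iff_tendsto_slope] at h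
  refine ge_of_tendsto h ?_
  filter_upwards [self_mem_nhdsWithin] with y hy
  have hy' : y ≠ x := hy
  rw [slope_def_field]
  rcases lt_or_gt_of_ne hy' with h' | h'
  · rw [div_nonneg_iff]
    right
    exact ⟨by have := hf h'.le; linarith, by linarith⟩
  · exact div_nonneg (by have := hf h'.le; linarith) (by linarith)


theorem statement0 (ψ : OM) (T : OM → OM)
    (hT : ∀ f : OM, (T f).toFun = f.toFun ∘ ψ.toFun)
    (htrans : TopologicallyTransitive T) :
    (∀ x : ℝ, ψ.toFun x ≠ x) ∧ ∀ x : ℝ, 0 < deriv ψ.toFun x := by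
  have hψc : ContDiff ℝ (⊤ : ℕ∞) ψ.toFun := ψ.slowly.1
  -- iterates of T are composition with iterates of ψ
  have hTn : ∀ (n : ℕ) (f : OM), (T^[n] f).toFun = f.toFun ∘ (ψ.toFun)^[n] := by
    intro n
    induction n with
    | zero => intro f; simp
    | succ k ih =>
      intro f
      rw [Function.iterate_succ_apply, ih (T f), hT f, Function.iterate_succ']
      rfl
  -- balls
  set Ball : OM → ℕ → SchwartzMap ℝ ℝ → ℝ → Set OM := fun g m v ε =>
    { f : OM | pOM m v (fun x => f.toFun x - g.toFun x) < ε } with hBall_def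
  have hopen : ∀ g m v ε, 0 < ε → IsOpen (Ball g m v ε) := by
    intro g m v ε hε
    exact TopologicalSpace.GenerateOpen.basic _ ⟨g, m, v, ε, hε, rfl⟩
  have hmemself : ∀ g m v ε, 0 < ε → g ∈ Ball g m v ε := by
    intro g m v ε hε
    show pOM m v (fun x => g.toFun x - g.toFun x) < ε
    have heq : (fun x => g.toFun x - g.toFun x) = fun _ : ℝ => (0:ℝ) := by
      funext x; ring
    rw [heq, pOM_zero]
    exact hε
  have hball : ∀ (f g : OM) (m : ℕ) (v : SchwartzMap ℝ ℝ) (ε : ℝ), f ∈ Ball g m v ε →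
      ∀ (x : ℝ) (j : Fin (m+1)),
        |v x * iteratedDeriv j.1 (fun y => f.toFun y - g.toFun y) x| < ε :=
    fun f g m v ε hf x j =>
      lt_of_le_of_lt (le_pOM (slowly_sub f.slowly g.slowly) m v x j) hf
  have hball0 : ∀ (f g : OM) (m : ℕ) (v : SchwartzMap ℝ ℝ) (ε : ℝ), f ∈ Ball g m v ε →
      ∀ x : ℝ, |v x * (f.toFun x - g.toFun x)| < ε := by
    intro f g m v ε hf x
    have := hball f g m v ε hf x ⟨0, Nat.succ_pos m⟩
    simpa [iteratedDeriv_zero] using this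
  -- Part 1: no fixed points
  have hnofix : ∀ x : ℝ, ψ.toFun x ≠ x := by
    intro x₀ hfix
    set bump : ContDiffBump x₀ := ⟨1, 2, one_pos, one_lt_two⟩ with hbump
    set v := schwartzOfBump x₀ bump with hv_def
    have hv : v x₀ = 1 := bump.one_of_mem_closedBall (Metric.mem_closedBall_self zero_le_one)
    obtain ⟨n, hn, h, ⟨⟨f, hfU, rfl⟩, hV⟩⟩ :=
      htrans (Ball (OM.lin 0 0) 0 v 1) (Ball (OM.lin 0 2) 0 v 1)
        (hopen _ _ _ _ one_pos) (hopen _ _ _ _ one_pos)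
        ⟨OM.lin 0 0, hmemself _ _ _ _ one_pos⟩ ⟨OM.lin 0 2, hmemself _ _ _ _ one_pos⟩
    have h1 := hball0 f (OM.lin 0 0) 0 v 1 hfU x₀
    have h2 := hball0 (T^[n] f) (OM.lin 0 2) 0 v 1 hV x₀
    have hval : (T^[n] f).toFun x₀ = f.toFun x₀ := by
      rw [hTn n f]
      simp [Function.comp, Function.iterate_fixed hfix n]
    have hlin00 : (OM.lin 0 0).toFun x₀ = 0 := by
      show (0:ℝ) * x₀ + 0 = 0; ring
    have hlin02 : (OM.lin 0 2).toFun x₀ = 2 := by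
      show (0:ℝ) * x₀ + 2 = 2; ring
    rw [hv, hlin00, one_mul, sub_zero] at h1
    rw [hv, hlin02, one_mul, hval] at h2
    have ha1 := abs_lt.1 h1
    have ha2 := abs_lt.1 h2
    linarith [ha1.2, ha2.1]
  -- Part 2: injectivity
  have hinj : Function.Injective ψ.toFun := by
    intro a b hab
    by_contra hne
    have hd : (0:ℝ) < dist a b := dist_pos.2 hne
    set r := dist a b with hr
    set bumpA : ContDiffBump a := ⟨r/2, 3*r/4, by positivity, by linarith⟩ with hbumpA
    set bumpB : ContDiffBump b := ⟨r/2, 3*r/4, by positivity, by linarith⟩ with hbumpB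
    set v := schwartzOfBump a bumpA + schwartzOfBump b bumpB with hv_def
    have hva : v a = 1 := by
      have h1 : bumpA a = 1 := bumpA.one_of_mem_closedBall
        (Metric.mem_closedBall_self (by positivity))
      have h2 : bumpB a = 0 := bumpB.zero_of_le_dist (by
        show 3*r/4 ≤ dist a b; linarith)
      show schwartzOfBump a bumpA a + schwartzOfBump b bumpB a = 1
      rw [schwartzOfBump_apply, schwartzOfBump_apply, h1, h2]; ring
    have hvb : v b = 1 := by
      have h1 : bumpB b = 1 := bumpB.one_of_mem_closedBall
        (Metric.mem_closedBall_self (by positivity))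
      have h2 : bumpA b = 0 := bumpA.zero_of_le_dist (by
        show 3*r/4 ≤ dist b a; rw [dist_comm]; linarith)
      show schwartzOfBump a bumpA b + schwartzOfBump b bumpB b = 1
      rw [schwartzOfBump_apply, schwartzOfBump_apply, h1, h2]; ring
    have hba : b - a ≠ 0 := sub_ne_zero.2 (Ne.symm hne)
    set g := OM.lin (2/(b-a)) (-(2*a/(b-a))) with hg_def
    have hga : g.toFun a = 0 := by
      show 2/(b-a) * a + -(2*a/(b-a)) = 0
      field_simp
      ring
    have hgb : g.toFun b = 2 := by
      show 2/(b-a) * b + -(2*a/(b-a)) = 2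
      field_simp
      ring
    obtain ⟨n, hn, h, ⟨⟨f, hfU, rfl⟩, hV⟩⟩ :=
      htrans (Ball (OM.lin 0 0) 0 v 1) (Ball g 0 v (1/2))
        (hopen _ _ _ _ one_pos) (hopen _ _ _ _ (by norm_num))
        ⟨OM.lin 0 0, hmemself _ _ _ _ one_pos⟩ ⟨g, hmemself _ _ _ _ (by norm_num)⟩
    have hiter : ψ.toFun^[n] a = ψ.toFun^[n] b := by
      obtain ⟨k, rfl⟩ := Nat.exists_eq_succ_of_ne_zero hn.ne'
      rw [Function.iterate_succ_apply, Function.iterate_succ_apply, hab]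
    have h2a := hball0 (T^[n] f) g 0 v (1/2) hV a
    have h2b := hball0 (T^[n] f) g 0 v (1/2) hV b
    rw [hva, hga, one_mul, sub_zero] at h2a
    rw [hvb, hgb, one_mul] at h2b
    have hval : (T^[n] f).toFun a = (T^[n] f).toFun b := by
      rw [hTn n f]
      simp [Function.comp, hiter]
    rw [hval] at h2a
    have ha1 := abs_lt.1 h2a
    have ha2 := abs_lt.1 h2b
    linarith [ha1.2, ha2.1]
  -- Part 3: strict monotonicity
  have hmono : StrictMono ψ.toFun := by
    rcases hψc.continuous.strictMono_of_inj hinj with hmono | hanti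
    · exact hmono
    · exfalso
      set F : ℝ → ℝ := fun x => ψ.toFun x - x with hF
      have hFc : Continuous F := hψc.continuous.sub continuous_id
      set x₁ := min 0 (ψ.toFun 0) - 1 with hx1
      set x₂ := max 0 (ψ.toFun 0) + 1 with hx2
      have hx12 : x₁ ≤ x₂ := by
        have := min_le_max (a := (0:ℝ)) (b := ψ.toFun 0)
        simp only [hx1, hx2]
        linarith
      have hF1 : 0 ≤ F x₁ := by
        have hlt : x₁ < 0 := by
          have := min_le_left (0:ℝ) (ψ.toFun 0); simp only [hx1]; linarith
        have := hanti hlt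
        have h2 := min_le_right (0:ℝ) (ψ.toFun 0)
        simp only [hF]
        simp only [hx1] at *
        linarith
      have hF2 : F x₂ ≤ 0 := by
        have hlt : (0:ℝ) < x₂ := by
          have := le_max_left (0:ℝ) (ψ.toFun 0); simp only [hx2]; linarith
        have := hanti hlt
        have h2 := le_max_right (0:ℝ) (ψ.toFun 0)
        simp only [hF]
        simp only [hx2] at *
        linarith
      obtain ⟨c, _, hc⟩ := intermediate_value_Icc' hx12 hFc.continuousOn ⟨hF2, hF1⟩
      exact hnofix c (by simpa [hF] using sub_eq_zero.1 hc)
  -- Part 4: positive derivative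
  refine ⟨hnofix, fun x₀ => ?_⟩
  have hdiff : Differentiable ℝ ψ.toFun := hψc.differentiable (by simp)
  have hnn : 0 ≤ deriv ψ.toFun x₀ :=
    monotone_deriv_nonneg hmono.monotone x₀ (hdiff x₀)
  rcases hnn.lt_or_eq with hpos | h0
  · exact hpos
  exfalso
  set bump : ContDiffBump x₀ := ⟨1, 2, one_pos, one_lt_two⟩ with hbump
  set v := schwartzOfBump x₀ bump with hv_def
  have hv : v x₀ = 1 := bump.one_of_mem_closedBall (Metric.mem_closedBall_self zero_le_one)
  obtain ⟨n, hn, h, ⟨⟨f, hfU, rfl⟩, hV⟩⟩ :=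
    htrans (Ball (OM.lin 0 0) 0 v 1) (Ball (OM.lin 1 0) 1 v (1/2))
      (hopen _ _ _ _ one_pos) (hopen _ _ _ _ (by norm_num))
      ⟨OM.lin 0 0, hmemself _ _ _ _ one_pos⟩ ⟨OM.lin 1 0, hmemself _ _ _ _ (by norm_num)⟩
  obtain ⟨k, rfl⟩ := Nat.exists_eq_succ_of_ne_zero hn.ne'
  have hcomp : (T^[k+1] f).toFun = (T^[k] f).toFun ∘ ψ.toFun := by
    rw [Function.iterate_succ_apply']
    exact hT _
  have hdiffg : DifferentiableAt ℝ (T^[k] f).toFun (ψ.toFun x₀) :=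
    ((T^[k] f).slowly.1.differentiable (by simp)).differentiableAt
  have hder0 : deriv (T^[k+1] f).toFun x₀ = 0 := by
    rw [hcomp, deriv_comp x₀ hdiffg (hdiff x₀), ← h0, mul_zero]
  have hb := hball (T^[k+1] f) (OM.lin 1 0) 1 v (1/2) hV x₀ ⟨1, by norm_num⟩
  have hder : deriv (fun y => (T^[k+1] f).toFun y - (OM.lin 1 0).toFun y) x₀ =
      deriv (T^[k+1] f).toFun x₀ - 1 := by
    have h1 : HasDerivAt (fun y : ℝ => (1:ℝ) * y + 0) 1 x₀ := by
      simpa using ((hasDerivAt_id x₀).const_mul (1:ℝ)).add_const (0:ℝ)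
    have h2 : HasDerivAt (T^[k+1] f).toFun (deriv (T^[k+1] f).toFun x₀) x₀ :=
      (((T^[k+1] f).slowly.1.differentiable (by simp)) x₀).hasDerivAt
    exact (h2.sub h1).deriv
  have hiter1 : iteratedDeriv (1:ℕ) (fun y => (T^[k+1] f).toFun y - (OM.lin 1 0).toFun y) x₀
      = deriv (fun y => (T^[k+1] f).toFun y - (OM.lin 1 0).toFun y) x₀ := by
    rw [iteratedDeriv_one]
  rw [show ((⟨1, by norm_num⟩ : Fin 2) : Fin (1+1)).1 = 1 from rfl] at hb
  rw [hiter1, hder, hder0, hv, one_mul] at hb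
  norm_num at hb

end
end

section
/- Let f ∈ C^∞(ℝ) be such that sup_{x∈ℝ} (1+|x|²)ⁿ|f(x)| < ∞ for every n ∈ ℕ. Then there exists a Schwartz function g ∈ 𝒮(ℝ), non-decreasing on (−∞,0] and non-increasing on [0,∞), such that |f(x)| ≤ g(x) for all x ∈ ℝ. -/
open Filter Topology Set

noncomputable section

open MeasureTheory Convolution
open scoped ContDiff


lemma deriv_sq : deriv (fun x : ℝ => x ^ 2) = fun x : ℝ => 2 * x := by
  ext x
  rw [deriv_pow_field]
  push_cast
  ring

lemma hasTemperateGrowth_sq : Function.HasTemperateGrowth (fun x : ℝ => x ^ 2) := by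
  constructor
  · exact contDiff_id.pow 2
  · intro n
    refine ⟨2, 2, fun x => ?_⟩
    rw [norm_iteratedFDeriv_eq_norm_iteratedDeriv]
    match n with
    | 0 =>
      simp only [iteratedDeriv_zero]
      have : ‖x ^ 2‖ ≤ (1 + ‖x‖) ^ 2 := by
        rw [norm_pow]
        nlinarith [norm_nonneg x]
      nlinarith [norm_nonneg x, this, pow_nonneg (add_nonneg zero_le_one (norm_nonneg x)) 2]
    | 1 =>
      rw [iteratedDeriv_one, deriv_sq]
      rw [norm_mul]
      have h1 : ‖x‖ ≤ (1 + ‖x‖) ^ 2 := by nlinarith [norm_nonneg x]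
      have : ‖(2:ℝ)‖ = 2 := by norm_num
      rw [this]
      nlinarith [norm_nonneg x]
    | (m + 2) =>
      have hd2 : deriv (fun x : ℝ => 2 * x) = fun _ : ℝ => (2:ℝ) := by
        ext y
        simpa using (hasDerivAt_id y).const_mul (2:ℝ) |>.deriv
      have h2 : iteratedDeriv (m + 2) (fun x : ℝ => x ^ 2) = iteratedDeriv m (fun _ : ℝ => (2:ℝ)) := by
        rw [iteratedDeriv_succ', deriv_sq, iteratedDeriv_succ', hd2]
      rw [h2, ← norm_iteratedFDeriv_eq_norm_iteratedDeriv]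
      have hp : (1:ℝ) ≤ (1 + ‖x‖) ^ 2 := one_le_pow₀ (by simp [norm_nonneg])
      match m with
      | 0 =>
        rw [norm_iteratedFDeriv_zero]
        simp only [Real.norm_ofNat]
        nlinarith
      | k + 1 =>
        rw [iteratedFDeriv_const_of_ne (by omega)]
        simp only [Pi.zero_apply, norm_zero]
        nlinarith

lemma my_integral_comp_sub (h : ℝ → ℝ) (x : ℝ) : ∫ s : ℝ, h (x - s) = ∫ t : ℝ, h t := by
  simp_rw [sub_eq_add_neg]
  have h1 : ∫ s : ℝ, h (x + -s) = ∫ s : ℝ, h (x + s) :=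
    integral_neg_eq_self (fun u => h (x + u)) volume
  rw [h1, integral_add_left_eq_self]

lemma my_iteratedFDeriv_congr {f g : ℝ → ℝ} {x : ℝ} (h : f =ᶠ[𝓝 x] g) (n : ℕ) :
    iteratedFDeriv ℝ n f x = iteratedFDeriv ℝ n g x := by
  simp only [← iteratedFDerivWithin_univ]
  exact (h.filter_mono nhdsWithin_le_nhds).iteratedFDerivWithin_eq h.eq_of_nhds n

lemma exists_schwartz_antitone_majorant (F : ℝ → ℝ) (hanti : Antitone F)
    (hnn : ∀ t, 0 ≤ F t)
    (hdecay : ∀ n : ℕ, ∃ C : ℝ, ∀ t : ℝ, 0 ≤ t → F t * (1 + t) ^ n ≤ C) :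
    ∃ G : SchwartzMap ℝ ℝ, AntitoneOn (⇑G) (Ici 0) ∧ ∀ t : ℝ, 0 ≤ t → F t ≤ G t := by
  classical
  choose C hC using hdecay
  set FF : ℝ → ℝ := fun t => F (max (t - 2) 0) with hFF
  have hFFanti : Antitone FF := fun a b hab => hanti (max_le_max (by linarith) le_rfl)
  have hFFnn : ∀ t, 0 ≤ FF t := fun t => hnn _
  have hFFle : ∀ t, FF t ≤ F 0 := fun t => hanti (le_max_right _ _)
  have hFFmeas : Measurable FF := hFFanti.measurable
  have hFFloc : LocallyIntegrable FF := hFFanti.locallyIntegrable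
  -- bump function
  set b : ContDiffBump (0 : ℝ) := ⟨1/2, 1, by norm_num, by norm_num⟩ with hb
  set φ : ℝ → ℝ := b.normed volume with hφ
  have hφnn : ∀ s, 0 ≤ φ s := b.nonneg_normed
  have hφint : Integrable φ := b.integrable_normed
  have hφsmooth : ContDiff ℝ ∞ φ := b.contDiff_normed
  have hφcs : HasCompactSupport φ := b.hasCompactSupport_normed
  have hφ1 : ∫ s, φ s = 1 := b.integral_normed
  have hφsupp : ∀ s, φ s ≠ 0 → |s| ≤ 1 := by
    intro s hs
    have h1 : s ∈ Function.support φ := Function.mem_support.2 hs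
    rw [hφ, b.support_normed_eq] at h1
    have : dist s 0 < 1 := by simpa [hb] using h1
    rw [Real.dist_eq, sub_zero] at this
    exact this.le
  set L : ℝ →L[ℝ] ℝ →L[ℝ] ℝ := ContinuousLinearMap.mul ℝ ℝ with hL
  set G0 : ℝ → ℝ := FF ⋆[L] φ with hG0
  -- iterated derivatives of φ
  have hsm_iter : ∀ n : ℕ, ContDiff ℝ ∞ (iteratedDeriv n φ) := by
    intro n
    induction n with
    | zero => simpa using hφsmooth
    | succ k ih =>
      rw [iteratedDeriv_succ]
      exact (contDiff_infty_iff_deriv.mp ih).2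
  have hsupp_iter : ∀ (n : ℕ) (s : ℝ), iteratedDeriv n φ s ≠ 0 → |s| ≤ 1 := by
    intro n
    induction n with
    | zero => simpa using hφsupp
    | succ k ih =>
      intro s hs
      rw [iteratedDeriv_succ] at hs
      have hmem : s ∈ tsupport (iteratedDeriv k φ) :=
        support_deriv_subset (Function.mem_support.2 hs)
      have hsub : Function.support (iteratedDeriv k φ) ⊆ {y : ℝ | |y| ≤ 1} :=
        fun y hy => ih y (Function.mem_support.1 hy)
      have hcl : tsupport (iteratedDeriv k φ) ⊆ {y : ℝ | |y| ≤ 1} :=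
        closure_minimal hsub (isClosed_le continuous_abs continuous_const)
      exact hcl hmem
  have hcs_iter : ∀ n : ℕ, HasCompactSupport (iteratedDeriv n φ) := by
    intro n
    induction n with
    | zero => simpa using hφcs
    | succ k ih => rw [iteratedDeriv_succ]; exact ih.deriv
  -- iterated derivatives of the convolution
  have hconv_deriv : ∀ n : ℕ, iteratedDeriv n G0 = FF ⋆[L] (iteratedDeriv n φ) := by
    intro n
    induction n with
    | zero => simp [iteratedDeriv_zero, hG0]
    | succ k ih =>
      rw [iteratedDeriv_succ, ih]
      ext x
      have hd := HasCompactSupport.hasDerivAt_convolution_right L hFFloc (hcs_iter k)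
        ((hsm_iter k).of_le (WithTop.coe_le_coe.2 le_top)) x
      rw [hd.deriv, ← iteratedDeriv_succ]
  -- bound on the convolution with ψ
  have hbound : ∀ (n : ℕ) (x : ℝ), |(FF ⋆[L] (iteratedDeriv n φ)) x| ≤
      (∫ s, |iteratedDeriv n φ s|) * FF (x - 1) := by
    intro n x
    set ψ := iteratedDeriv n φ with hψ
    have hψcont : Continuous ψ := (hsm_iter n).continuous
    have hψint : Integrable ψ := hψcont.integrable_of_hasCompactSupport (hcs_iter n)
    have hcs' : HasCompactSupport (fun t => ψ (x - t)) := by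
      apply HasCompactSupport.intro (isCompact_Icc (a := x - 1) (b := x + 1))
      intro t ht
      by_contra hz
      have h1 : |x - t| ≤ 1 := hsupp_iter n _ hz
      rw [abs_le] at h1
      exact ht ⟨by linarith [h1.2], by linarith [h1.1]⟩
    have hint2 : Integrable (fun t => ψ (x - t)) :=
      (hψcont.comp (continuous_const.sub continuous_id)).integrable_of_hasCompactSupport hcs'
    have key : ∀ t : ℝ, ‖FF t * ψ (x - t)‖ ≤ FF (x - 1) * |ψ (x - t)| := by
      intro t
      by_cases hz : ψ (x - t) = 0
      · simp [hz]
      · have h1 : |x - t| ≤ 1 := hsupp_iter n _ hz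
        rw [abs_le] at h1
        have h2 : x - 1 ≤ t := by linarith [h1.2]
        rw [Real.norm_eq_abs, abs_mul, abs_of_nonneg (hFFnn t)]
        exact mul_le_mul_of_nonneg_right (hFFanti h2) (abs_nonneg _)
    have hint3 : Integrable (fun t => FF (x - 1) * |ψ (x - t)|) := (hint2.abs).const_mul _
    have step1 : |(FF ⋆[L] ψ) x| ≤ ∫ t, FF (x - 1) * |ψ (x - t)| := by
      rw [convolution_def]
      exact norm_integral_le_of_norm_le hint3 (Eventually.of_forall key)
    have step2 : ∫ t, FF (x - 1) * |ψ (x - t)| = FF (x - 1) * ∫ s, |ψ s| := by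
      rw [integral_const_mul, my_integral_comp_sub (fun u => |ψ u|) x]
    calc |(FF ⋆[L] ψ) x| ≤ ∫ t, FF (x - 1) * |ψ (x - t)| := step1
      _ = FF (x - 1) * ∫ s, |ψ s| := step2
      _ = (∫ s, |ψ s|) * FF (x - 1) := mul_comm _ _
  -- smoothness of the convolution
  have hG0sm : ContDiff ℝ ∞ G0 := hφcs.contDiff_convolution_right L hFFloc hφsmooth
  -- the cutoff
  set χ : ℝ → ℝ := fun t => Real.smoothTransition (t + 2) with hχ
  have hχsm : ContDiff ℝ ∞ χ := Real.smoothTransition.contDiff.comp (contDiff_id.add contDiff_const)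
  have hχ0 : ∀ t : ℝ, t ≤ -2 → χ t = 0 := fun t ht =>
    Real.smoothTransition.zero_of_nonpos (by linarith)
  have hχ1 : ∀ t : ℝ, -1 ≤ t → χ t = 1 := fun t ht =>
    Real.smoothTransition.one_of_one_le (by linarith)
  set Gc : ℝ → ℝ := fun t => χ t * G0 t with hGc
  have hGcsm : ContDiff ℝ ∞ Gc := hχsm.mul hG0sm
  -- Schwartz decay estimates
  have hdecay' : ∀ k n : ℕ, ∃ D : ℝ, ∀ x : ℝ, ‖x‖ ^ k * ‖iteratedFDeriv ℝ n Gc x‖ ≤ D := by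
    intro k n
    have hcont : Continuous fun x => ‖x‖ ^ k * ‖iteratedFDeriv ℝ n Gc x‖ :=
      ((continuous_norm).pow k).mul (hGcsm.continuous_iteratedFDeriv
        (WithTop.coe_le_coe.2 le_top)).norm
    obtain ⟨D₁, hD₁⟩ := (isCompact_Icc (a := (-3:ℝ)) (b := 4)).exists_bound_of_continuousOn
      hcont.continuousOn
    set In : ℝ := ∫ s, |iteratedDeriv n φ s| with hIn
    have hInnn : 0 ≤ In := integral_nonneg fun s => abs_nonneg _
    have hCknn : 0 ≤ C k := le_trans (by simpa using hnn 0) (by simpa using hC k 0 le_rfl)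
    refine ⟨max D₁ (3 ^ k * (In * C k)), fun x => ?_⟩
    rcases lt_or_ge x (-2) with hx | hx
    · have hev : Gc =ᶠ[𝓝 x] fun _ => (0:ℝ) := by
        filter_upwards [Iio_mem_nhds hx] with y hy
        simp only [hGc]
        rw [hχ0 y (le_of_lt hy), zero_mul]
      rw [my_iteratedFDeriv_congr hev n, iteratedFDeriv_zero_fun]
      have h0 : (0:ℝ) ≤ D₁ := by
        have := hD₁ 0 (by constructor <;> norm_num)
        exact le_trans (norm_nonneg _) this
      simp only [Pi.zero_apply, norm_zero, mul_zero]
      exact le_max_of_le_left h0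
    · rcases le_or_gt x 4 with hx4 | hx4
      · refine le_max_of_le_left ?_
        have h' := hD₁ x ⟨by linarith, hx4⟩
        rw [Real.norm_eq_abs] at h'
        exact (le_abs_self _).trans h'
      · refine le_max_of_le_right ?_
        have hev : Gc =ᶠ[𝓝 x] G0 := by
          filter_upwards [Ioi_mem_nhds (show (-1:ℝ) < x by linarith)] with y hy
          simp only [hGc]
          rw [hχ1 y (le_of_lt hy), one_mul]
        rw [my_iteratedFDeriv_congr hev n, norm_iteratedFDeriv_eq_norm_iteratedDeriv]
        have h1 : ‖iteratedDeriv n G0 x‖ ≤ In * FF (x - 1) := by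
          rw [hconv_deriv n, Real.norm_eq_abs]
          exact hbound n x
        have h2 : FF (x - 1) = F (x - 3) := by
          simp only [hFF]
          congr 1
          rw [max_eq_left (by linarith : (0:ℝ) ≤ x - 1 - 2)]
          ring
        have h3 : F (x - 3) * (1 + (x - 3)) ^ k ≤ C k := hC k _ (by linarith)
        have hxpos : (0:ℝ) < x := by linarith
        have hx2 : (0:ℝ) < x - 2 := by linarith
        have hxk : x ^ k ≤ 3 ^ k * (1 + (x - 3)) ^ k := by
          rw [← mul_pow]
          exact pow_le_pow_left₀ hxpos.le (by linarith) k
        calc ‖x‖ ^ k * ‖iteratedDeriv n G0 x‖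
            ≤ x ^ k * (In * F (x - 3)) := by
              rw [Real.norm_eq_abs, abs_of_pos hxpos]
              exact mul_le_mul_of_nonneg_left (h2 ▸ h1) (by positivity)
          _ ≤ (3 ^ k * (1 + (x - 3)) ^ k) * (In * F (x - 3)) := by
              apply mul_le_mul_of_nonneg_right hxk
              exact mul_nonneg hInnn (hnn _)
          _ = 3 ^ k * (In * (F (x - 3) * (1 + (x - 3)) ^ k)) := by ring
          _ ≤ 3 ^ k * (In * C k) := by
              apply mul_le_mul_of_nonneg_left _ (by positivity)
              exact mul_le_mul_of_nonneg_left h3 hInnn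
  -- alternative formula for G0
  have hG0eq : ∀ x : ℝ, G0 x = ∫ s, FF (x - s) * φ s := by
    intro x
    rw [hG0, convolution_def]
    simp only [hL, ContinuousLinearMap.mul_apply']
    have h1 := my_integral_comp_sub (fun t => FF t * φ (x - t)) x
    simp only [sub_sub_cancel] at h1
    rw [← h1]
  have hint1 : ∀ x : ℝ, Integrable fun s => FF (x - s) * φ s := by
    intro x
    apply Integrable.mono' (hφint.const_mul (F 0))
    · exact ((hFFmeas.comp (measurable_const.sub measurable_id)).mul
        hφsmooth.continuous.measurable).aestronglyMeasurable
    · refine Eventually.of_forall fun s => ?_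
      rw [Real.norm_eq_abs, abs_mul, abs_of_nonneg (hFFnn _), abs_of_nonneg (hφnn _)]
      exact mul_le_mul_of_nonneg_right (hFFle _) (hφnn _)
  have hG0anti : Antitone G0 := by
    intro x y hxy
    rw [hG0eq, hG0eq]
    apply integral_mono (hint1 y) (hint1 x)
    intro s
    exact mul_le_mul_of_nonneg_right (hFFanti (by linarith : x - s ≤ y - s)) (hφnn s)
  have hdom : ∀ t : ℝ, 0 ≤ t → F t ≤ G0 t := by
    intro t ht
    rw [hG0eq]
    have h1 : F t = ∫ s, F t * φ s := by rw [integral_const_mul, hφ1, mul_one]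
    rw [h1]
    apply integral_mono (hφint.const_mul (F t)) (hint1 t)
    intro s
    by_cases hz : φ s = 0
    · simp [hz]
    · have hs1 : |s| ≤ 1 := hφsupp s hz
      rw [abs_le] at hs1
      have : max (t - s - 2) 0 ≤ t := by
        apply max_le _ ht
        linarith [hs1.1]
      exact mul_le_mul_of_nonneg_right (hanti this) (hφnn s)
  -- assemble
  refine ⟨⟨Gc, hGcsm, hdecay'⟩, ?_, ?_⟩
  · intro a ha b hb' hab
    have hca : Gc a = G0 a := by
      simp only [hGc]; rw [hχ1 a (by linarith [mem_Ici.1 ha]), one_mul]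
    have hcb : Gc b = G0 b := by
      simp only [hGc]; rw [hχ1 b (by linarith [mem_Ici.1 hb']), one_mul]
    show Gc b ≤ Gc a
    rw [hca, hcb]
    exact hG0anti hab
  · intro t ht
    show F t ≤ Gc t
    have : Gc t = G0 t := by
      simp only [hGc]; rw [hχ1 t (by linarith), one_mul]
    rw [this]
    exact hdom t ht

theorem statement8 (f : ℝ → ℝ) (hf : ContDiff ℝ (⊤ : ℕ∞) f)
    (hb : ∀ n : ℕ, ∃ B : ℝ, ∀ x : ℝ, (1 + x ^ 2) ^ n * |f x| ≤ B) :
    ∃ g : SchwartzMap ℝ ℝ, MonotoneOn (⇑g) (Iic 0) ∧ AntitoneOn (⇑g) (Ici 0) ∧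
      ∀ x : ℝ, |f x| ≤ g x := by
  choose M hM using hb
  have habs : ∀ (n : ℕ) (x : ℝ), |f x| * (1 + x ^ 2) ^ n ≤ M n := by
    intro n x; rw [mul_comm]; exact hM n x
  set F : ℝ → ℝ := fun t => sSup ((fun y => |f y|) '' {y : ℝ | t ≤ y ^ 2}) with hF
  have hne : ∀ t : ℝ, ((fun y => |f y|) '' {y : ℝ | t ≤ y ^ 2}).Nonempty := by
    intro t
    refine ⟨|f (Real.sqrt (max t 0) + 1)|, ⟨Real.sqrt (max t 0) + 1, ?_, rfl⟩⟩
    have h0 : 0 ≤ Real.sqrt (max t 0) := Real.sqrt_nonneg _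
    have h1 : Real.sqrt (max t 0) ^ 2 = max t 0 := Real.sq_sqrt (le_max_right _ _)
    simp only [mem_setOf_eq]
    nlinarith [le_max_left t 0]
  have hbdd : ∀ t : ℝ, BddAbove ((fun y => |f y|) '' {y : ℝ | t ≤ y ^ 2}) := by
    intro t
    refine ⟨M 0, ?_⟩
    rintro z ⟨y, -, rfl⟩
    simpa using habs 0 y
  have hanti : Antitone F := by
    intro a b hab
    apply csSup_le_csSup (hbdd a) (hne b)
    apply image_mono
    intro y hy
    exact le_trans hab hy
  have hnn : ∀ t, 0 ≤ F t := by
    intro t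
    obtain ⟨z, y, hy, rfl⟩ := hne t
    exact le_trans (abs_nonneg _) (le_csSup (hbdd t) ⟨y, hy, rfl⟩)
  have hFf : ∀ x : ℝ, |f x| ≤ F (x ^ 2) := fun x =>
    le_csSup (hbdd _) ⟨x, by simp, rfl⟩
  have hdec : ∀ n : ℕ, ∃ C : ℝ, ∀ t : ℝ, 0 ≤ t → F t * (1 + t) ^ n ≤ C := by
    intro n
    refine ⟨M n, fun t ht => ?_⟩
    have hpos : (0:ℝ) < (1 + t) ^ n := by positivity
    have hFle : F t ≤ M n / (1 + t) ^ n := by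
      apply csSup_le (hne t)
      rintro z ⟨y, hy, rfl⟩
      rw [le_div_iff₀ hpos]
      calc |f y| * (1 + t) ^ n ≤ |f y| * (1 + y ^ 2) ^ n := by
            apply mul_le_mul_of_nonneg_left _ (abs_nonneg _)
            exact pow_le_pow_left₀ (by linarith) (by simpa using hy) n
        _ ≤ M n := habs n y
    calc F t * (1 + t) ^ n ≤ (M n / (1 + t) ^ n) * (1 + t) ^ n :=
          mul_le_mul_of_nonneg_right hFle hpos.le
      _ = M n := div_mul_cancel₀ _ hpos.ne'
  obtain ⟨G, hGanti, hGdom⟩ := exists_schwartz_antitone_majorant F hanti hnn hdec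
  have hup : ∃ (k : ℕ) (c : ℝ), ∀ x : ℝ, ‖x‖ ≤ c * (1 + ‖(fun x : ℝ => x ^ 2) x‖) ^ k := by
    refine ⟨1, 1, fun x => ?_⟩
    simp only [Real.norm_eq_abs, pow_one, one_mul]
    have := abs_nonneg x
    have h2 : |x ^ 2| = |x| ^ 2 := by rw [abs_pow]
    nlinarith [sq_abs x]
  refine ⟨SchwartzMap.compCLM ℝ hasTemperateGrowth_sq hup G, ?_, ?_, ?_⟩
  · intro a ha b hb hab
    show G (a ^ 2) ≤ G (b ^ 2)
    have hb2 : b ^ 2 ≤ a ^ 2 := by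
      simp only [mem_Iic] at ha hb
      nlinarith
    exact hGanti (mem_Ici.2 (sq_nonneg b)) (mem_Ici.2 (sq_nonneg a)) hb2
  · intro a ha b hb hab
    show G (b ^ 2) ≤ G (a ^ 2)
    have hb2 : a ^ 2 ≤ b ^ 2 := by
      simp only [mem_Ici] at ha hb
      nlinarith
    exact hGanti (mem_Ici.2 (sq_nonneg a)) (mem_Ici.2 (sq_nonneg b)) hb2
  · intro x
    exact le_trans (hFf x) (hGdom _ (sq_nonneg x))


end
end

section
/- Let f ∈ C^∞(ℝ) be real valued such that sup_{x∈ℝ} (1+|x|²)|f(x)| < ∞, inf_{x∈ℝ} |1 + f'(x)| > 0, and f' ∈ 𝒪_M(ℝ). Let ψ(x) = x + f(x) for x ∈ ℝ. Then ψ is bijective and g∘ψ^{−1} ∈ 𝒮(ℝ) for every Schwartz function g ∈ 𝒮(ℝ). -/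
open scoped ContDiff


open Filter Topology Set

noncomputable section

def PolyBound (h : ℝ → ℝ) : Prop :=
  ∃ C : ℝ, 0 ≤ C ∧ ∃ n : ℕ, ∀ x : ℝ, |h x| ≤ C * (1 + x ^ 2) ^ n

inductive MyRing (f : ℝ → ℝ) : (ℝ → ℝ) → Prop
  | inv : MyRing f (fun x => (1 + deriv f x)⁻¹)
  | der (j : ℕ) : MyRing f (iteratedDeriv j (deriv f))
  | add {a b : ℝ → ℝ} : MyRing f a → MyRing f b → MyRing f (a + b)
  | mul {a b : ℝ → ℝ} : MyRing f a → MyRing f b → MyRing f (a * b)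
  | smul (r : ℝ) {a : ℝ → ℝ} : MyRing f a → MyRing f (r • a)

lemma myring_main {f : ℝ → ℝ} (hf1 : ContDiff ℝ ∞ (deriv f))
    (hne : ∀ x : ℝ, 1 + deriv f x ≠ 0) {h : ℝ → ℝ} (hh : MyRing f h) :
    ContDiff ℝ ∞ h ∧ MyRing f (deriv h) := by
  induction hh with
  | inv =>
      constructor
      · exact (contDiff_const.add hf1).inv hne
      · have hd : deriv (fun x => (1 + deriv f x)⁻¹)
            = (-1 : ℝ) • (iteratedDeriv 1 (deriv f) * ((fun x => (1 + deriv f x)⁻¹) *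
                (fun x => (1 + deriv f x)⁻¹))) := by
          funext x
          have hdf : HasDerivAt (deriv f) (deriv (deriv f) x) x :=
            ((hf1.differentiable (by simp)) x).hasDerivAt
          have h1 : HasDerivAt (fun y => 1 + deriv f y) (deriv (deriv f) x) x :=
            hdf.const_add 1
          have h2 : HasDerivAt (fun y => (1 + deriv f y)⁻¹) (-deriv (deriv f) x / (1 + deriv f x) ^ 2) x :=
            h1.inv (hne x)
          rw [h2.deriv]
          simp only [iteratedDeriv_one, Pi.smul_apply, Pi.mul_apply, smul_eq_mul]
          field_simp
        rw [hd]
        exact MyRing.smul (-1) (MyRing.mul (MyRing.der 1) (MyRing.mul MyRing.inv MyRing.inv))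
  | der j =>
      constructor
      · rw [iteratedDeriv_eq_iterate]; exact hf1.iterate_deriv j
      · rw [← iteratedDeriv_succ]; exact MyRing.der (j + 1)
  | add ha hb iha ihb =>
      rename_i a b
      refine ⟨iha.1.add ihb.1, ?_⟩
      have : deriv (a + b) = deriv a + deriv b := by
        funext x
        simp only [Pi.add_apply]
        exact deriv_fun_add ((iha.1.differentiable (by simp)) x)
          ((ihb.1.differentiable (by simp)) x)
      rw [this]; exact MyRing.add iha.2 ihb.2
  | mul ha hb iha ihb =>
      refine ⟨iha.1.mul ihb.1, ?_⟩
      rename_i a b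
      have : deriv (a * b) = deriv a * b + a * deriv b := by
        funext x
        have := deriv_mul ((iha.1.differentiable (by simp)) x)
          ((ihb.1.differentiable (by simp)) x)
        simpa using this
      rw [this]; exact MyRing.add (MyRing.mul iha.2 hb) (MyRing.mul ha ihb.2)
  | smul r ha iha =>
      refine ⟨iha.1.const_smul r, ?_⟩
      rename_i a
      have : deriv (r • a) = r • deriv a := by
        funext x
        simp only [Pi.smul_apply]
        exact deriv_const_smul r ((iha.1.differentiable (by simp)) x)
      rw [this]; exact MyRing.smul r iha.2

lemma myring_poly {f : ℝ → ℝ}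
    (hpoly : ∀ j : ℕ, ∃ C : ℝ, 0 < C ∧ ∃ n : ℕ, ∀ x : ℝ,
      |iteratedDeriv j (deriv f) x| ≤ C * (1 + x ^ 2) ^ n)
    {c : ℝ} (hc : 0 < c) (hcle : ∀ x : ℝ, c ≤ |1 + deriv f x|)
    {h : ℝ → ℝ} (hh : MyRing f h) : PolyBound h := by
  have hone : ∀ x : ℝ, (1 : ℝ) ≤ 1 + x ^ 2 := fun x => by nlinarith [sq_nonneg x]
  induction hh with
  | inv =>
      refine ⟨c⁻¹, by positivity, 0, fun x => ?_⟩
      rw [pow_zero, mul_one, abs_inv]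
      exact inv_anti₀ hc (hcle x)
  | der j => obtain ⟨C, hC, n, hn⟩ := hpoly j; exact ⟨C, hC.le, n, hn⟩
  | add ha hb iha ihb =>
      rename_i a b
      obtain ⟨C1, hC1, n1, h1⟩ := iha
      obtain ⟨C2, hC2, n2, h2⟩ := ihb
      refine ⟨C1 + C2, by positivity, max n1 n2, fun x => ?_⟩
      have e1 : (1 + x ^ 2) ^ n1 ≤ (1 + x ^ 2) ^ max n1 n2 :=
        pow_le_pow_right₀ (hone x) (le_max_left _ _)
      have e2 : (1 + x ^ 2) ^ n2 ≤ (1 + x ^ 2) ^ max n1 n2 :=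
        pow_le_pow_right₀ (hone x) (le_max_right _ _)
      calc |(a + b) x| ≤ |a x| + |b x| := abs_add_le _ _
        _ ≤ C1 * (1 + x ^ 2) ^ max n1 n2 + C2 * (1 + x ^ 2) ^ max n1 n2 := by
            gcongr <;> [exact (h1 x).trans (by nlinarith); exact (h2 x).trans (by nlinarith)]
        _ = (C1 + C2) * (1 + x ^ 2) ^ max n1 n2 := by ring
  | mul ha hb iha ihb =>
      rename_i a b
      obtain ⟨C1, hC1, n1, h1⟩ := iha
      obtain ⟨C2, hC2, n2, h2⟩ := ihb
      refine ⟨C1 * C2, by positivity, n1 + n2, fun x => ?_⟩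
      have := mul_le_mul (h1 x) (h2 x) (abs_nonneg _) (by positivity)
      calc |(a * b) x| = |a x| * |b x| := abs_mul _ _
        _ ≤ (C1 * (1 + x ^ 2) ^ n1) * (C2 * (1 + x ^ 2) ^ n2) := this
        _ = C1 * C2 * (1 + x ^ 2) ^ (n1 + n2) := by rw [pow_add]; ring
  | smul r ha iha =>
      rename_i a
      obtain ⟨C1, hC1, n1, h1⟩ := iha
      refine ⟨|r| * C1, by positivity, n1, fun x => ?_⟩
      calc |(r • a) x| = |r| * |a x| := by simp [abs_mul]
        _ ≤ |r| * (C1 * (1 + x ^ 2) ^ n1) := by gcongr; exact h1 x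
        _ = |r| * C1 * (1 + x ^ 2) ^ n1 := by ring


theorem statement15 (f : ℝ → ℝ) (hf : ContDiff ℝ (⊤ : ℕ∞) f)
    (hb : ∃ B : ℝ, ∀ x : ℝ, (1 + x ^ 2) * |f x| ≤ B)
    (hinf : ∃ c : ℝ, 0 < c ∧ ∀ x : ℝ, c ≤ |1 + deriv f x|)
    (hf' : SlowlyIncreasing (deriv f)) :
    Function.Bijective (fun x : ℝ => x + f x) ∧
      ∀ g : SchwartzMap ℝ ℝ, ∃ h : SchwartzMap ℝ ℝ,
        ⇑h = ⇑g ∘ Function.invFun (fun x : ℝ => x + f x) := by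
  obtain ⟨B, hB⟩ := hb
  obtain ⟨c, hc, hcle⟩ := hinf
  set ψ : ℝ → ℝ := fun x => x + f x with hψdef
  have hone : ∀ x : ℝ, (1 : ℝ) ≤ 1 + x ^ 2 := fun x => by nlinarith [sq_nonneg x]
  have hfB : ∀ x, |f x| ≤ B := fun x =>
    (le_mul_of_one_le_left (abs_nonneg _) (hone x)).trans (hB x)
  have hB0 : 0 ≤ B := (abs_nonneg (f 0)).trans (hfB 0)
  have hf1 : ContDiff ℝ ∞ (deriv f) := hf'.1.of_le (by simp)
  have hfd : Differentiable ℝ f := hf.differentiable (by simp)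
  have hf1d : Differentiable ℝ (deriv f) := hf1.differentiable (by simp)
  have hdfc : Continuous (deriv f) := hf1.continuous
  -- positivity of 1 + f'
  have hpos : ∀ x, 0 < 1 + deriv f x := by
    by_contra hcon
    push_neg at hcon
    obtain ⟨x₀, hx₀⟩ := hcon
    have hall : ∀ x, 1 + deriv f x ≤ 0 := by
      intro x
      by_contra hx
      push_neg at hx
      have hcont : Continuous fun y => 1 + deriv f y := continuous_const.add hdfc
      have h0 : (0 : ℝ) ∈ uIcc ((fun y => 1 + deriv f y) x₀) ((fun y => 1 + deriv f y) x) := by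
        rw [Set.mem_uIcc]; left; exact ⟨hx₀, hx.le⟩
      obtain ⟨ξ, _, hξ⟩ := intermediate_value_uIcc (a := x₀) (b := x)
        (f := fun y => 1 + deriv f y) hcont.continuousOn h0
      have h2 := hcle ξ
      have h3 : 1 + deriv f ξ = 0 := hξ
      rw [h3, abs_zero] at h2
      linarith
    have hlec : ∀ x, deriv f x + (1 + c) ≤ 0 := by
      intro x
      have h1 := hcle x
      rw [abs_of_nonpos (hall x), le_neg] at h1
      linarith
    set g : ℝ → ℝ := fun x => f x + (1 + c) * x with hg
    have hgd : ∀ x, HasDerivAt g (deriv f x + (1 + c)) x := by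
      intro x
      have h1 : HasDerivAt (fun y : ℝ => (1 + c) * y) (1 + c) x := by
        simpa using (hasDerivAt_id x).const_mul (1 + c)
      exact ((hfd x).hasDerivAt).add h1
    have hant : Antitone g := by
      refine antitone_of_deriv_nonpos (fun x => (hgd x).differentiableAt) (fun x => ?_)
      rw [(hgd x).deriv]; exact hlec x
    have hX := hant (show (0 : ℝ) ≤ 2 * B + 1 by linarith)
    have h1 := hfB (2 * B + 1)
    have h2 := hfB 0
    rw [abs_le] at h1 h2
    simp only [hg, mul_zero, add_zero] at hX
    nlinarith
  have hclow : ∀ x, c ≤ 1 + deriv f x := fun x => by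
    have := hcle x; rwa [abs_of_pos (hpos x)] at this
  have hne : ∀ x, 1 + deriv f x ≠ 0 := fun x => (hpos x).ne'
  -- ψ bijective
  have hψd : ∀ x, HasDerivAt ψ (1 + deriv f x) x := fun x => by
    exact (hasDerivAt_id x).add ((hfd x).hasDerivAt)
  have hmono : StrictMono ψ :=
    strictMono_of_deriv_pos fun x => by rw [(hψd x).deriv]; exact hpos x
  have hψcont : Continuous ψ := continuous_id.add hf.continuous
  have htop : Tendsto ψ atTop atTop := by
    refine tendsto_atTop_mono (fun x => ?_) (tendsto_atTop_add_const_right atTop (-B) tendsto_id)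
    have := (abs_le.1 (hfB x)).1
    simp only [ψ, id_eq]; linarith
  have hbot : Tendsto ψ atBot atBot := by
    refine tendsto_atBot_mono (fun x => ?_) (tendsto_atBot_add_const_right atBot B tendsto_id)
    have := (abs_le.1 (hfB x)).2
    simp only [ψ, id_eq]; linarith
  have hsurj : Function.Surjective ψ := hψcont.surjective htop hbot
  have hbij : Function.Bijective ψ := ⟨hmono.injective, hsurj⟩
  -- the inverse
  set φ : ℝ → ℝ := Function.invFun ψ with hφdef
  have hψφ : ∀ y, ψ (φ y) = y := fun y => Function.invFun_eq (hsurj y)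
  have hφψ : ∀ x, φ (ψ x) = x := fun x => Function.leftInverse_invFun hmono.injective x
  have hφcont : Continuous φ := by
    have he : φ = ⇑(StrictMono.orderIsoOfSurjective ψ hmono hsurj).symm := by
      funext y
      have h1 : ψ ((StrictMono.orderIsoOfSurjective ψ hmono hsurj).symm y) = y :=
        StrictMono.orderIsoOfSurjective_self_symm_apply ψ hmono hsurj y
      conv_lhs => rw [← h1, hφψ]
    rw [he]
    exact OrderIso.continuous _
  have hφd : ∀ y, HasDerivAt φ ((1 + deriv f (φ y))⁻¹) y := fun y =>
    HasDerivAt.of_local_left_inverse hφcont.continuousAt (hψd (φ y)) (hne (φ y))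
      (Eventually.of_forall hψφ)
  have hderφ : deriv φ = fun y => (1 + deriv f (φ y))⁻¹ := funext fun y => (hφd y).deriv
  set u : ℝ → ℝ := fun x => (1 + deriv f x)⁻¹ with hudef
  have husm : ContDiff ℝ ∞ u := (contDiff_const.add hf1).inv hne
  have hφsm : ∀ n : ℕ, ContDiff ℝ (n : WithTop ℕ∞) φ := by
    intro n
    induction n with
    | zero => exact contDiff_zero.2 hφcont
    | succ m ih =>
        rw [show ((m + 1 : ℕ) : WithTop ℕ∞) = (m : WithTop ℕ∞) + 1 by push_cast; rfl]
        refine contDiff_succ_iff_deriv.2 ⟨fun y => (hφd y).differentiableAt, ?_, ?_⟩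
        · intro h; exact absurd h (by simp)
        · rw [hderφ]
          exact (husm.of_le (by exact_mod_cast le_top)).comp ih
  have hφtop : ContDiff ℝ ∞ φ := contDiff_infty.2 hφsm
  -- the derivative chain
  set G : ℕ → (ℝ → ℝ) := fun n => (fun g => deriv g * u)^[n] u with hGdef
  have hGsucc : ∀ n, G (n + 1) = deriv (G n) * u := fun n =>
    Function.iterate_succ_apply' (fun g => deriv g * u) n u
  have hGR : ∀ n, MyRing f (G n) := by
    intro n
    induction n with
    | zero => exact MyRing.inv
    | succ m ih =>
        rw [hGsucc]
        exact MyRing.mul (myring_main hf1 hne ih).2 MyRing.inv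
  have hGφ : ∀ n, iteratedDeriv (n + 1) φ = fun y => G n (φ y) := by
    intro n
    induction n with
    | zero =>
        rw [iteratedDeriv_one, hderφ]
        rfl
    | succ m ih =>
        rw [iteratedDeriv_succ, ih]
        funext y
        have h1 : HasDerivAt (G m) (deriv (G m) (φ y)) (φ y) :=
          (((myring_main hf1 hne (hGR m)).1.differentiable
            (by simp)) _).hasDerivAt
        have h2 := h1.comp y (hφd y)
        have h3 : (fun y => G m (φ y)) = G m ∘ φ := rfl
        rw [h3, h2.deriv, hGsucc]
        simp [Pi.mul_apply]
        exact Or.inl rfl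
  have hφbound : ∀ y, |φ y| ≤ |y| + B := by
    intro y
    have h1 : φ y + f (φ y) = y := hψφ y
    have h2 : φ y = y - f (φ y) := by linarith
    rw [h2]
    calc |y - f (φ y)| ≤ |y| + |f (φ y)| := abs_sub _ _
      _ ≤ |y| + B := by linarith [hfB (φ y)]
  -- temperate growth
  have htemp : Function.HasTemperateGrowth φ := by
    refine ⟨hφtop, fun n => ?_⟩
    cases n with
    | zero =>
        refine ⟨1, B + 1, fun y => ?_⟩
        rw [norm_iteratedFDeriv_eq_norm_iteratedDeriv, iteratedDeriv_zero]
        simp only [Real.norm_eq_abs, pow_one]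
        have := hφbound y
        nlinarith [abs_nonneg y]
    | succ m =>
        obtain ⟨C, hC0, k, hCk⟩ := myring_poly hf'.2 hc hcle (hGR m)
        refine ⟨2 * k, C * ((1 + B) ^ 2) ^ k, fun y => ?_⟩
        rw [norm_iteratedFDeriv_eq_norm_iteratedDeriv, hGφ m]
        simp only [Real.norm_eq_abs]
        have h1 : |G m (φ y)| ≤ C * (1 + (φ y) ^ 2) ^ k := hCk (φ y)
        have hsq : (φ y) ^ 2 ≤ (|y| + B) ^ 2 := by
          rw [← sq_abs (φ y)]
          exact pow_le_pow_left₀ (abs_nonneg _) (hφbound y) 2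
        have h2 : 1 + (φ y) ^ 2 ≤ (1 + B) ^ 2 * (1 + |y|) ^ 2 := by
          nlinarith [abs_nonneg y, hB0, mul_nonneg hB0 (abs_nonneg y),
            sq_nonneg (1 + |y| + B), mul_nonneg (mul_nonneg hB0 (abs_nonneg y)) (show (0:ℝ) ≤ 1 + |y| + B by positivity)]
        calc |G m (φ y)| ≤ C * (1 + (φ y) ^ 2) ^ k := h1
          _ ≤ C * ((1 + B) ^ 2 * (1 + |y|) ^ 2) ^ k := by
              gcongr
          _ = C * ((1 + B) ^ 2) ^ k * (1 + |y|) ^ (2 * k) := by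
              rw [mul_pow, pow_mul]; ring
  have hupper : ∃ (k : ℕ) (C : ℝ), ∀ y : ℝ, ‖y‖ ≤ C * (1 + ‖φ y‖) ^ k := by
    refine ⟨1, B + 1, fun y => ?_⟩
    simp only [Real.norm_eq_abs, pow_one]
    have h1 : φ y + f (φ y) = y := hψφ y
    have h2 : |y| ≤ |φ y| + B := by
      have h3 : |φ y + f (φ y)| ≤ |φ y| + B :=
        (abs_add_le _ _).trans (by linarith [hfB (φ y)])
      rwa [h1] at h3
    nlinarith [abs_nonneg (φ y)]
  refine ⟨hbij, fun g => ⟨SchwartzMap.compCLM ℝ htemp hupper g, rfl⟩⟩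

end
end

section
/- Let ψ ∈ 𝒪_M(ℝ) be bijective and let H ∈ 𝒪_M(ℝ) satisfy H'(x) ≠ 0 for every x ∈ ℝ and H(ψ(x)) = H(x) + 1 for every x ∈ ℝ. Then ψ has no fixed points, H is bijective, and for every Schwartz function v ∈ 𝒮(ℝ), lim_{n→∞} v(ψ_n(0))·n = 0 and lim_{n→∞} v(ψ_{−n}(0))·n = 0. -/
open Filter Topology Set

noncomputable section

lemma schwartz_poly_bound (v : SchwartzMap ℝ ℝ) (k : ℕ) :
    ∃ E : ℝ, 0 ≤ E ∧ ∀ y : ℝ, |v y| * (1 + y ^ 2) ^ k ≤ E := by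
  refine ⟨2 ^ (2*k) * ((Finset.Iic ((2*k, 0) : ℕ × ℕ)).sup
      fun m => SchwartzMap.seminorm ℝ m.1 m.2) v, by positivity, fun y => ?_⟩
  have h1 := SchwartzMap.one_add_le_sup_seminorm_apply (𝕜 := ℝ) (m := (2*k,0))
      (le_refl (2*k)) (le_refl 0) v y
  rw [norm_iteratedFDeriv_zero] at h1
  have h2 : (1 + y ^ 2) ^ k ≤ (1 + ‖y‖) ^ (2*k) := by
    rw [pow_mul]
    apply pow_le_pow_left₀ (by positivity)
    have hy : ‖y‖ = |y| := rfl
    nlinarith [abs_nonneg y, sq_abs y]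
  calc |v y| * (1+y^2)^k ≤ |v y| * (1+‖y‖)^(2*k) :=
        mul_le_mul_of_nonneg_left h2 (abs_nonneg _)
    _ = (1+‖y‖)^(2*k) * ‖v y‖ := by rw [Real.norm_eq_abs, mul_comm]; rfl
    _ ≤ _ := h1

lemma key_tendsto (C : ℝ) (hC : 0 < C) (k : ℕ) (x : ℕ → ℝ)
    (hx : ∀ n : ℕ, (n : ℝ) ≤ C * (1 + (x n) ^ 2) ^ (k+1)) (v : SchwartzMap ℝ ℝ) :
    Tendsto (fun n : ℕ => v (x n) * (n : ℝ)) atTop (𝓝 0) := by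
  obtain ⟨E, hE0, hE⟩ := schwartz_poly_bound v (k+2)
  have ht : Tendsto (fun n => 1 + (x n) ^ 2) atTop atTop := by
    rw [tendsto_atTop]; intro M
    obtain ⟨N, hN⟩ := exists_nat_ge (C * (max M 1) ^ (k+1))
    filter_upwards [eventually_ge_atTop N] with n hn
    have h1 : C * (max M 1)^(k+1) ≤ C * (1+(x n)^2)^(k+1) :=
      le_trans (hN.trans (Nat.cast_le.2 hn)) (hx n)
    have h2 : (max M 1)^(k+1) ≤ (1+(x n)^2)^(k+1) := le_of_mul_le_mul_left h1 hC
    have h3 : max M 1 ≤ 1+(x n)^2 :=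
      le_of_pow_le_pow_left₀ (Nat.succ_ne_zero k) (by positivity) h2
    exact (le_max_left M 1).trans h3
  have htend : Tendsto (fun n : ℕ => (C*E) * (1+(x n)^2)⁻¹) atTop (𝓝 0) := by
    simpa using (tendsto_inv_atTop_zero.comp ht).const_mul (C*E)
  refine squeeze_zero_norm (fun n => ?_) htend
  have hpos : (0:ℝ) < 1 + (x n)^2 := by positivity
  have h1 : |v (x n)| * (n:ℝ) ≤ |v (x n)| * (C * (1+(x n)^2)^(k+1)) :=
    mul_le_mul_of_nonneg_left (hx n) (abs_nonneg _)
  have h2 := hE (x n)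
  have h3 : |v (x n)| * (1+(x n)^2)^(k+1) ≤ E * (1+(x n)^2)⁻¹ := by
    rw [← div_eq_mul_inv, le_div_iff₀ hpos]
    calc |v (x n)| * (1+(x n)^2)^(k+1) * (1+(x n)^2)
        = |v (x n)| * (1+(x n)^2)^(k+2) := by ring
      _ ≤ E := h2
  have hb : |v (x n)| * (n:ℝ) ≤ C * E * (1+(x n)^2)⁻¹ := by
    calc |v (x n)| * (n:ℝ) ≤ C * (|v (x n)| * (1+(x n)^2)^(k+1)) := by linarith
      _ ≤ C * (E * (1+(x n)^2)⁻¹) := mul_le_mul_of_nonneg_left h3 hC.le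
      _ = C*E*(1+(x n)^2)⁻¹ := by ring
  calc ‖v (x n) * (n:ℝ)‖ = |v (x n)| * (n:ℝ) := by
        rw [Real.norm_eq_abs, abs_mul, Nat.abs_cast]
    _ ≤ _ := hb

theorem statement17 (ψ : OM) (hbij : Function.Bijective ψ.toFun)
    (H : OM) (hH : ∀ x : ℝ, deriv H.toFun x ≠ 0)
    (habel : ∀ x : ℝ, H.toFun (ψ.toFun x) = H.toFun x + 1) :
    (∀ x : ℝ, ψ.toFun x ≠ x) ∧ Function.Bijective H.toFun ∧
      ∀ v : SchwartzMap ℝ ℝ,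
        Tendsto (fun n : ℕ => v (ψ.toFun^[n] 0) * (n : ℝ)) atTop (𝓝 0) ∧
        Tendsto (fun n : ℕ => v (Function.invFun (ψ.toFun^[n]) 0) * (n : ℝ)) atTop (𝓝 0) := by
  have hcont : Continuous H.toFun := H.slowly.1.continuous
  have hcd : Continuous (deriv H.toFun) := H.slowly.1.continuous_deriv (by simp)
  -- iterate identities
  have hHiter : ∀ n : ℕ, ∀ x : ℝ, H.toFun (ψ.toFun^[n] x) = H.toFun x + n := by
    intro n
    induction n with
    | zero => intro x; simp
    | succ n ih =>
      intro x
      rw [Function.iterate_succ_apply', habel, ih]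
      push_cast; ring
  set φ : ℝ → ℝ := Function.invFun ψ.toFun with hφdef
  have hψφ : ∀ x, ψ.toFun (φ x) = x := fun x => Function.rightInverse_invFun hbij.2 x
  have hHφ : ∀ x : ℝ, H.toFun (φ x) = H.toFun x - 1 := by
    intro x
    have := habel (φ x)
    rw [hψφ x] at this
    linarith
  have hHinv : ∀ n : ℕ, ∀ x : ℝ, H.toFun (φ^[n] x) = H.toFun x - n := by
    intro n
    induction n with
    | zero => intro x; simp
    | succ n ih =>
      intro x
      rw [Function.iterate_succ_apply, ih, hHφ]
      push_cast; ring
  have hinvFun : ∀ n : ℕ, Function.invFun (ψ.toFun^[n]) 0 = φ^[n] 0 := by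
    intro n
    apply (hbij.iterate n).injective
    rw [Function.rightInverse_invFun (hbij.iterate n).surjective 0]
    exact (Function.LeftInverse.iterate hψφ n 0).symm
  -- sign of the derivative
  have hsign : (∀ x : ℝ, 0 < deriv H.toFun x) ∨ (∀ x : ℝ, deriv H.toFun x < 0) := by
    rcases lt_or_gt_of_ne (hH 0) with h0 | h0
    · right
      intro x
      rcases lt_or_gt_of_ne (hH x) with hx | hx
      · exact hx
      · exfalso
        have hm : (0:ℝ) ∈ uIcc (deriv H.toFun 0) (deriv H.toFun x) := by
          rw [Set.mem_uIcc]; left; exact ⟨h0.le, hx.le⟩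
        obtain ⟨c, _, hc⟩ := intermediate_value_uIcc (hcd.continuousOn) hm
        exact hH c hc
    · left
      intro x
      rcases lt_or_gt_of_ne (hH x) with hx | hx
      · exfalso
        have hm : (0:ℝ) ∈ uIcc (deriv H.toFun x) (deriv H.toFun 0) := by
          rw [Set.mem_uIcc]; left; exact ⟨hx.le, h0.le⟩
        obtain ⟨c, _, hc⟩ := intermediate_value_uIcc (hcd.continuousOn) hm
        exact hH c hc
      · exact hx
  have hinj : Function.Injective H.toFun := by
    rcases hsign with h | h
    · exact (strictMono_of_deriv_pos h).injective
    · exact (strictAnti_of_deriv_neg h).injective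
  have hsurj : Function.Surjective H.toFun := by
    intro y
    obtain ⟨n, hn⟩ := exists_nat_ge |y - H.toFun 0|
    have habs := abs_le.1 (le_trans (le_refl _) hn)
    have h1 := hHinv n 0
    have h2 := hHiter n 0
    have hm : y ∈ uIcc (H.toFun (φ^[n] 0)) (H.toFun (ψ.toFun^[n] 0)) := by
      rw [h1, h2, Set.mem_uIcc]; left
      constructor <;> linarith [habs.1, habs.2]
    obtain ⟨c, _, hc⟩ := intermediate_value_uIcc hcont.continuousOn hm
    exact ⟨c, hc⟩
  refine ⟨?_, ⟨hinj, hsurj⟩, ?_⟩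
  · intro x hx
    have := habel x
    rw [hx] at this
    linarith
  · -- polynomial bound on H
    obtain ⟨C, hC, k, hCk⟩ := H.slowly.2 0
    simp only [iteratedDeriv_zero] at hCk
    have hgen : ∀ (z : ℝ) (n : ℕ), (n:ℝ) ≤ |H.toFun z - H.toFun 0| →
        (n:ℝ) ≤ (C + |H.toFun 0| + 1) * (1 + z^2)^(k+1) := by
      intro z n hn
      have h1 : |H.toFun z| ≤ C * (1+z^2)^k := hCk z
      have hp : (1:ℝ) ≤ 1+z^2 := by nlinarith [sq_nonneg z]
      have hpow : (1+z^2)^k ≤ (1+z^2)^(k+1) := pow_le_pow_right₀ hp (Nat.le_succ k)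
      have hpow1 : (1:ℝ) ≤ (1+z^2)^(k+1) := one_le_pow₀ hp
      have habs : |H.toFun z - H.toFun 0| ≤ |H.toFun z| + |H.toFun 0| :=
        abs_sub _ _
      nlinarith [abs_nonneg (H.toFun 0), mul_le_mul_of_nonneg_left hpow1
        (abs_nonneg (H.toFun 0)), mul_le_mul_of_nonneg_left hpow hC.le]
    intro v
    have hCpos : (0:ℝ) < C + |H.toFun 0| + 1 := by positivity
    constructor
    · apply key_tendsto _ hCpos k
      intro n
      apply hgen
      rw [hHiter n 0]
      rw [abs_of_nonneg (by simp : (0:ℝ) ≤ H.toFun 0 + n - H.toFun 0)]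
      simp
    · have heq : (fun n : ℕ => v (Function.invFun (ψ.toFun^[n]) 0) * (n : ℝ)) =
          fun n : ℕ => v (φ^[n] 0) * (n : ℝ) := by
        funext n; rw [hinvFun n]
      rw [heq]
      apply key_tendsto _ hCpos k
      intro n
      apply hgen
      rw [hHinv n 0]
      rw [abs_of_nonpos (by simp : H.toFun 0 - n - H.toFun 0 ≤ 0)]
      simp


end
end
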